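/- arXiv:0812.2591 — 5 statements merged into one kernel-verified Lean document; each statement's English description precedes it below -/
import Mathlib

section
/- Let F_q be a finite field with q odd, and let α be a nonzero element of F_q. Define G_α as the set {[a] : a ∈ F_q, a ≠ ±α} together with an extra element [∞], with operation: [a]*[∞] = [∞]*[a] = [a], [a₁]*[−a₁] = [∞], and [a₁]*[a₂] = [(a₁a₂ + α²)/(a₁ + a₂)] when a₁ + a₂ ≠ 0. Then (G_α, *) is an abelian group with identity [∞]. -/
/-- The carrier of the group `G_α`: elements `[a]` with `a ≠ ±α`, plus `[∞]` (encoded `none`). -/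
def GCarrier (F : Type*) [Field F] (α : F) : Type _ := Option {a : F // a ≠ α ∧ a ≠ -α}

/-- The group operation `*` on `G_α`, with `[∞]` as identity. -/
noncomputable def GOp {F : Type*} [Field F] (α : F) :
    GCarrier F α → GCarrier F α → GCarrier F α
  | none, x => x
  | some a, none => some a
  | some a₁, some a₂ =>
    open Classical in
    if h : a₁.1 + a₂.1 = 0 then none
    else some ⟨(a₁.1 * a₂.1 + α ^ 2) / (a₁.1 + a₂.1), by
      constructor
      · intro hc
        rw [div_eq_iff h] at hc
        have h2 : (a₁.1 - α) * (a₂.1 - α) = 0 := by ring_nf; linear_combination hc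
        rcases mul_eq_zero.mp h2 with h3 | h3
        · exact a₁.2.1 (sub_eq_zero.mp h3)
        · exact a₂.2.1 (sub_eq_zero.mp h3)
      · intro hc
        rw [div_eq_iff h] at hc
        have h2 : (a₁.1 + α) * (a₂.1 + α) = 0 := by ring_nf; linear_combination hc
        rcases mul_eq_zero.mp h2 with h3 | h3
        · exact a₁.2.2 (eq_neg_of_add_eq_zero_left h3)
        · exact a₂.2.2 (eq_neg_of_add_eq_zero_left h3)⟩

/-- Powers in `G_α`. -/
noncomputable def GPow {F : Type*} [Field F] (α : F) (x : GCarrier F α) : ℕ → GCarrier F α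
  | 0 => none
  | n + 1 => GOp α x (GPow α x n)

/-!
For finite `a, b, c` one computes
`([a] * [b]) * [c] = [(a b c + α² (a + b + c)) / (a b + b c + c a + α²)]`, read as `[∞]` when the
denominator vanishes. This is symmetric in `a, b, c`, so associativity follows from commutativity.
The computations are done in `Option F`, through the injective map forgetting the side conditions
`a ≠ ±α`.
-/

namespace GCarrier

variable {F : Type*} [Field F] {α : F}

lemma neg_mem {a : F} (ha : a ≠ α ∧ a ≠ -α) : -a ≠ α ∧ -a ≠ -α :=
  ⟨fun h => ha.2 (neg_eq_iff_eq_neg.mp h), fun h => ha.1 (neg_injective h)⟩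

lemma sq_sub_sq_ne_zero {a : F} (ha : a ≠ α ∧ a ≠ -α) : α ^ 2 - a ^ 2 ≠ 0 :=
  sub_ne_zero.mpr fun h => (sq_eq_sq_iff_eq_or_eq_neg.mp h.symm).elim ha.1 ha.2

end GCarrier

section GOp

variable {F : Type*} [Field F] {α : F}

lemma none_GOp (x : GCarrier F α) : GOp α none x = x := rfl

lemma GOp_none (x : GCarrier F α) : GOp α x none = x := by
  cases x <;> rfl

lemma map_val_injective :
    Function.Injective (Option.map Subtype.val : GCarrier F α → Option F) :=
  Option.map_injective Subtype.val_injective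

open Classical in
lemma map_val_GOp_some (a b : {a : F // a ≠ α ∧ a ≠ -α}) :
    (GOp α (some a) (some b)).map Subtype.val =
      if a.1 + b.1 = 0 then none else some ((a.1 * b.1 + α ^ 2) / (a.1 + b.1)) := by
  by_cases h : a.1 + b.1 = 0 <;> simp [GOp, h]

open Classical in
lemma map_val_GOp_GOp_some (a b c : {a : F // a ≠ α ∧ a ≠ -α}) :
    (GOp α (GOp α (some a) (some b)) (some c)).map Subtype.val =
      if a.1 * b.1 + b.1 * c.1 + c.1 * a.1 + α ^ 2 = 0 then none
      else some ((a.1 * b.1 * c.1 + α ^ 2 * (a.1 + b.1 + c.1)) /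
        (a.1 * b.1 + b.1 * c.1 + c.1 * a.1 + α ^ 2)) := by
  have hab := map_val_GOp_some a b
  split_ifs at hab with hab0
  · have hb : b.1 = -a.1 := eq_neg_of_add_eq_zero_right hab0
    have hN : a.1 * b.1 + b.1 * c.1 + c.1 * a.1 + α ^ 2 = α ^ 2 - a.1 ^ 2 := by
      rw [hb]
      ring
    have ha := GCarrier.sq_sub_sq_ne_zero a.2
    rw [Option.map_eq_none_iff.mp hab, hN, if_neg ha]
    change some c.1 = some _
    congr 1
    field_simp
    rw [hb]
    ring
  · obtain ⟨d, hd, hdv⟩ := Option.map_eq_some_iff.mp hab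
    have hdc : d.1 + c.1 = (a.1 * b.1 + b.1 * c.1 + c.1 * a.1 + α ^ 2) / (a.1 + b.1) := by
      rw [hdv]
      field_simp
      ring
    simp only [hd]
    rw [map_val_GOp_some, hdc, div_eq_zero_iff, or_iff_left hab0]
    split_ifs with hN
    · rfl
    · congr 1
      rw [hdv]
      field_simp
      ring

lemma GOp_comm (x y : GCarrier F α) : GOp α x y = GOp α y x := by
  rcases x with _ | a <;> rcases y with _ | b
  iterate 3 rfl
  apply map_val_injective
  rw [map_val_GOp_some, map_val_GOp_some, add_comm, mul_comm]

lemma GOp_assoc (x y z : GCarrier F α) : GOp α (GOp α x y) z = GOp α x (GOp α y z) := by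
  rcases x with _ | a <;> rcases y with _ | b <;> rcases z with _ | c
  iterate 6 rfl
  · exact GOp_none (GOp α (some a) (some b))
  apply map_val_injective
  rw [GOp_comm (some a), map_val_GOp_GOp_some, map_val_GOp_GOp_some, ← add_rotate (a.1 * b.1),
    ← mul_rotate a.1, ← add_rotate a.1]

lemma GOp_some_neg (a : {a : F // a ≠ α ∧ a ≠ -α}) :
    GOp α (some a) (some ⟨-a.1, GCarrier.neg_mem a.2⟩) = none := by
  apply Option.map_eq_none_iff.mp
  rw [map_val_GOp_some, if_pos (add_neg_cancel a.1)]

end GOp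

theorem G_alpha_is_abelian_group_general {F : Type*} [Field F]
    (α : F) :
    (∀ x : GCarrier F α, GOp α none x = x ∧ GOp α x none = x) ∧
    (∀ x y : GCarrier F α, GOp α x y = GOp α y x) ∧
    (∀ x y z : GCarrier F α, GOp α (GOp α x y) z = GOp α x (GOp α y z)) ∧
    (∀ x : GCarrier F α, ∃ y : GCarrier F α, GOp α x y = none) := by
  refine ⟨fun x => ⟨none_GOp x, GOp_none x⟩, GOp_comm, GOp_assoc, ?_⟩
  rintro (_ | a)
  · exact ⟨none, rfl⟩
  · exact ⟨_, GOp_some_neg a⟩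

/-- For a finite field `F` of odd cardinality and `α ≠ 0`,
`(G_α, *)` is an abelian group with identity `[∞]`. -/
theorem G_alpha_is_abelian_group {F : Type*} [Field F] [Fintype F]
    (hq : Odd (Fintype.card F)) (α : F) (hα : α ≠ 0) :
    (∀ x : GCarrier F α, GOp α none x = x ∧ GOp α x none = x) ∧
    (∀ x y : GCarrier F α, GOp α x y = GOp α y x) ∧
    (∀ x y z : GCarrier F α, GOp α (GOp α x y) z = GOp α x (GOp α y z)) ∧
    (∀ x : GCarrier F α, ∃ y : GCarrier F α, GOp α x y = none) :=
  G_alpha_is_abelian_group_general α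
end

section
/- With G_α as above, the map ψ : G_α → F_q^× given by ψ([∞]) = 1 and ψ([a]) = (a + α)/(a − α) is a group isomorphism from (G_α, *) onto the multiplicative group F_q^×. -/
/-- The map `ψ : G_α → F`, `[∞] ↦ 1`, `[a] ↦ (a+α)/(a−α)`. -/
noncomputable def GPsi {F : Type*} [Field F] (α : F) : GCarrier F α → F
  | none => 1
  | some a => (a.1 + α) / (a.1 - α)

/-!
Cayley-transform picture: `ψ` is the Möbius map `a ↦ (a + α)/(a - α)`, with inverse
`b ↦ α (b + 1)/(b - 1)`, which is a bijection from `F \ {α}` onto `F \ {1}`; sending `[∞] ↦ 1`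
makes it a bijection onto `F`, and removing `a = -α` (the preimage of `0`) leaves `F^×`.
It is multiplicative because of the factorizations
`a₁a₂ + α² ± α(a₁ + a₂) = (a₁ ± α)(a₂ ± α)`.
-/

lemma two_ne_zero_of_odd_card {F : Type*} [Field F] [Fintype F]
    (hq : Odd (Fintype.card F)) : (2 : F) ≠ 0 :=
  Ring.two_ne_zero fun hchar => by
    have := FiniteField.even_card_of_char_two hchar
    have := Nat.odd_iff.mp hq
    omega

section

variable {F : Type*} [Field F] {α : F}

lemma sub_ne_zero_of_mem_GCarrier (a : {a : F // a ≠ α ∧ a ≠ -α}) : a.1 - α ≠ 0 :=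
  sub_ne_zero.mpr a.2.1

lemma add_ne_zero_of_mem_GCarrier (a : {a : F // a ≠ α ∧ a ≠ -α}) : a.1 + α ≠ 0 :=
  fun h => a.2.2 (eq_neg_of_add_eq_zero_left h)

lemma GOp_some_some_of_add_eq_zero {a₁ a₂ : {a : F // a ≠ α ∧ a ≠ -α}}
    (h : a₁.1 + a₂.1 = 0) : GOp α (some a₁) (some a₂) = none :=
  dif_pos h

lemma GOp_some_some_of_add_ne_zero {a₁ a₂ : {a : F // a ≠ α ∧ a ≠ -α}}
    (h : a₁.1 + a₂.1 ≠ 0) :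
    ∃ c, GOp α (some a₁) (some a₂) = some c ∧ c.1 = (a₁.1 * a₂.1 + α ^ 2) / (a₁.1 + a₂.1) :=
  ⟨_, dif_neg h, rfl⟩

lemma GPsi_ne_zero (x : GCarrier F α) : GPsi α x ≠ 0 := by
  cases x with
  | none => exact one_ne_zero
  | some a => exact div_ne_zero (add_ne_zero_of_mem_GCarrier a) (sub_ne_zero_of_mem_GCarrier a)

lemma GPsi_GOp (x y : GCarrier F α) : GPsi α (GOp α x y) = GPsi α x * GPsi α y := by
  match x, y with
  | none, y => simp [GOp, GPsi]
  | some a, none => simp [GOp, GPsi]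
  | some a₁, some a₂ =>
    have h₁ := sub_ne_zero_of_mem_GCarrier a₁
    have h₂ := sub_ne_zero_of_mem_GCarrier a₂
    show _ = (a₁.1 + α) / (a₁.1 - α) * ((a₂.1 + α) / (a₂.1 - α))
    by_cases hsum : a₁.1 + a₂.1 = 0
    · rw [GOp_some_some_of_add_eq_zero hsum]
      show 1 = _
      rw [div_mul_div_comm, eq_comm,
        div_eq_one_iff_eq (mul_ne_zero h₁ h₂), eq_neg_of_add_eq_zero_right hsum]
      ring
    · obtain ⟨c, hc, hcval⟩ := GOp_some_some_of_add_ne_zero hsum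
      have hnum : c.1 + α = (a₁.1 + α) * (a₂.1 + α) / (a₁.1 + a₂.1) := by
        rw [hcval]; field_simp; ring
      have hden : c.1 - α = (a₁.1 - α) * (a₂.1 - α) / (a₁.1 + a₂.1) := by
        rw [hcval]; field_simp; ring
      rw [hc]
      show (c.1 + α) / (c.1 - α) = _
      rw [hnum, hden]
      field_simp

lemma GPsi_some_ne_one (h2α : 2 * α ≠ 0) (a : {a : F // a ≠ α ∧ a ≠ -α}) : GPsi α (some a) ≠ 1 := by
  intro h
  rw [GPsi, div_eq_one_iff_eq (sub_ne_zero_of_mem_GCarrier a)] at h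
  exact h2α (by linear_combination h)

lemma GPsi_injective (h2α : 2 * α ≠ 0) : Function.Injective (GPsi α) := by
  intro x y h
  match x, y with
  | none, none => rfl
  | none, some b => exact absurd h.symm (GPsi_some_ne_one h2α b)
  | some a, none => exact absurd h (GPsi_some_ne_one h2α a)
  | some a, some b =>
    have h' : (a.1 + α) / (a.1 - α) = (b.1 + α) / (b.1 - α) := h
    rw [div_eq_div_iff (sub_ne_zero_of_mem_GCarrier a) (sub_ne_zero_of_mem_GCarrier b)] at h'
    have hab : 2 * α * (b.1 - a.1) = 0 := by linear_combination h'
    have := (mul_eq_zero.mp hab).resolve_left h2α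
    exact congrArg some (Subtype.ext (sub_eq_zero.mp this).symm)

lemma exists_GPsi_eq (h2α : 2 * α ≠ 0) {b : F} (hb : b ≠ 0) : ∃ x : GCarrier F α, GPsi α x = b := by
  by_cases hb1 : b = 1
  · exact ⟨none, hb1.symm⟩
  have hbm : b - 1 ≠ 0 := sub_ne_zero.mpr hb1
  set a := α * (b + 1) / (b - 1) with ha
  have hsub : a - α = 2 * α / (b - 1) := by rw [ha]; field_simp; ring
  have hadd : a + α = 2 * α * b / (b - 1) := by rw [ha]; field_simp; ring
  have hsub0 : a - α ≠ 0 := hsub ▸ div_ne_zero h2α hbm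
  have hadd0 : a + α ≠ 0 := hadd ▸ div_ne_zero (mul_ne_zero h2α hb) hbm
  refine ⟨some ⟨a, sub_ne_zero.mp hsub0, fun h => hadd0 (by rw [h]; ring)⟩, ?_⟩
  show (a + α) / (a - α) = b
  rw [hadd, hsub, div_div_div_cancel_right₀ hbm, mul_div_cancel_left₀ b h2α]

lemma range_GPsi (h2α : 2 * α ≠ 0) : Set.range (GPsi α) = {b : F | b ≠ 0} :=
  Set.ext fun _ => ⟨fun ⟨x, hx⟩ => hx ▸ GPsi_ne_zero x, exists_GPsi_eq h2α⟩

end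

/-- `ψ` is a group isomorphism from `(G_α, *)` onto the
multiplicative group `F_q^× = F \ {0}`. -/
theorem psi_isomorphism {F : Type*} [Field F] [Fintype F]
    (hq : Odd (Fintype.card F)) (α : F) (hα : α ≠ 0) :
    Function.Injective (GPsi α) ∧
    Set.range (GPsi α) = {b : F | b ≠ 0} ∧
    (∀ x y : GCarrier F α, GPsi α (GOp α x y) = GPsi α x * GPsi α y) := by
  have h2α : 2 * α ≠ 0 := mul_ne_zero (two_ne_zero_of_odd_card hq) hα
  exact ⟨GPsi_injective h2α, range_GPsi h2α, GPsi_GOp⟩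
end

section
/- Let [a] ∈ G_α with [a]² ≠ [∞] and suppose [a]^d = [∞] for some d > 0. Let ζ_d ∈ F_q be a primitive d-th root of unity. Then α = ± a(ζ_d^k − 1)/(ζ_d^k + 1) for some integer k with 0 < k < d/2. -/
namespace GCarrier

variable {F : Type*} [Field F] (α : F)

theorem gOp_some_some_of_add_eq_zero (a₁ a₂ : {a : F // a ≠ α ∧ a ≠ -α})
    (h : a₁.1 + a₂.1 = 0) : GOp α (some a₁) (some a₂) = none :=
  dif_pos h

theorem exists_gOp_some_some_eq_some (a₁ a₂ : {a : F // a ≠ α ∧ a ≠ -α})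
    (h : a₁.1 + a₂.1 ≠ 0) :
    ∃ c, GOp α (some a₁) (some a₂) = some c ∧ c.1 * (a₁.1 + a₂.1) = a₁.1 * a₂.1 + α ^ 2 :=
  ⟨_, dif_neg h, div_mul_cancel₀ _ h⟩

/-- The isomorphism `ψ : G_α → F^×` of the paper, with values in `F`. -/
def psi : GCarrier F α → F
  | none => 1
  | some c => (c.1 + α) / (c.1 - α)

theorem psi_gOp (x y : GCarrier F α) : psi α (GOp α x y) = psi α x * psi α y := by
  match x, y with
  | none, y => simp [GOp, psi]
  | some a₁, none => simp [GOp, psi]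
  | some a₁, some a₂ =>
    have h₁ : a₁.1 - α ≠ 0 := sub_ne_zero.mpr a₁.2.1
    have h₂ : a₂.1 - α ≠ 0 := sub_ne_zero.mpr a₂.2.1
    by_cases h : a₁.1 + a₂.1 = 0
    · have h₁' : a₁.1 + α ≠ 0 := fun h' => a₁.2.2 (eq_neg_of_add_eq_zero_left h')
      have ha₂ := eq_neg_of_add_eq_zero_right h
      rw [gOp_some_some_of_add_eq_zero α a₁ a₂ h]
      simp only [psi]
      rw [ha₂] at h₂ ⊢
      field_simp
      ring
    · obtain ⟨c, hc, hcmul⟩ := exists_gOp_some_some_eq_some α a₁ a₂ h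
      have hc' : c.1 - α ≠ 0 := sub_ne_zero.mpr c.2.1
      rw [hc]
      simp only [psi]
      rw [div_mul_div_comm, div_eq_div_iff hc' (mul_ne_zero h₁ h₂)]
      linear_combination (-2 * α) * hcmul

theorem psi_gPow (x : GCarrier F α) (n : ℕ) : psi α (GPow α x n) = psi α x ^ n := by
  induction n with
  | zero => simp [GPow, psi]
  | succ n ih => rw [GPow, psi_gOp, ih, pow_succ', mul_comm]

theorem psi_eq_one_iff {α : F} (hα : α ≠ 0) (h2 : (2 : F) ≠ 0) (x : GCarrier F α) :
    psi α x = 1 ↔ x = none := by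
  refine ⟨fun h => ?_, fun h => h ▸ rfl⟩
  match x with
  | none => rfl
  | some c =>
    rw [psi, div_eq_one_iff_eq (sub_ne_zero.mpr c.2.1)] at h
    exact absurd (by linear_combination h) (mul_ne_zero h2 hα)

end GCarrier

theorem IsPrimitiveRoot.exists_pow_eq_or_pow_eq_inv {K : Type*} [Field K] {ζ b : K} {d : ℕ}
    [NeZero d] (hζ : IsPrimitiveRoot ζ d) (hb : b ^ d = 1) (hb2 : b ^ 2 ≠ 1) :
    ∃ k, 0 < k ∧ 2 * k < d ∧ (ζ ^ k = b ∨ ζ ^ k = b⁻¹) := by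
  obtain ⟨j, hjd, rfl⟩ := hζ.eq_pow_of_pow_eq_one hb
  have hj0 : j ≠ 0 := by rintro rfl; simp at hb2
  have hj2 : 2 * j ≠ d := by
    rintro rfl; exact hb2 (by rw [← pow_mul, mul_comm, hζ.pow_eq_one])
  rcases lt_or_gt_of_ne hj2 with hlt | hgt
  · exact ⟨j, by omega, hlt, Or.inl rfl⟩
  · refine ⟨d - j, by omega, by omega, Or.inr (eq_inv_of_mul_eq_one_left ?_)⟩
    rw [← pow_add, Nat.sub_add_cancel hjd.le, hζ.pow_eq_one]

theorem eq_mul_sub_one_div_add_one {K : Type*} [Field K] {x y z : K} (hxy : x - y ≠ 0)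
    (hz : z ≠ -1) (h : z = (x + y) / (x - y)) : y = x * (z - 1) / (z + 1) := by
  rw [eq_div_iff (fun h' => hz (eq_neg_of_add_eq_zero_left h')), h]
  field_simp
  ring

/-- Proposition: `α = ± a(ζ_d^k − 1)/(ζ_d^k + 1)`.
If `[a] ∈ G_α` with `[a]² ≠ [∞]` and `[a]^d = [∞]` for some `d > 0`, and `ζ`
is a primitive `d`-th root of unity in `F`, then
`α = ± a(ζ^k − 1)/(ζ^k + 1)` for some `0 < k < d/2`. -/
theorem sqrt_from_root_of_unity {F : Type*} [Field F] [Fintype F]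
    (hq : Odd (Fintype.card F)) (α : F) (hα : α ≠ 0)
    (a : F) (ha : a ≠ α ∧ a ≠ -α) (d : ℕ) (hd : 0 < d)
    (h2 : GPow α (some ⟨a, ha⟩) 2 ≠ none)
    (hdord : GPow α (some ⟨a, ha⟩) d = none)
    (ζ : F) (hζ : IsPrimitiveRoot ζ d) :
    ∃ k : ℕ, 0 < k ∧ 2 * k < d ∧
      (α = a * (ζ ^ k - 1) / (ζ ^ k + 1) ∨ α = -(a * (ζ ^ k - 1) / (ζ ^ k + 1))) := by
  have : NeZero d := ⟨hd.ne'⟩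
  have h2F : (2 : F) ≠ 0 := Ring.two_ne_zero fun h => by
    simpa [FiniteField.even_card_iff_char_two.mp h] using Nat.odd_iff.mp hq
  set b := GCarrier.psi α (some ⟨a, ha⟩) with hb
  have hbd : b ^ d = 1 :=
    (GCarrier.psi_gPow α _ d).symm.trans (congrArg (GCarrier.psi α) hdord)
  have hb2 : b ^ 2 ≠ 1 := fun h =>
    h2 ((GCarrier.psi_eq_one_iff hα h2F _).mp ((GCarrier.psi_gPow α _ 2).trans h))
  have hb1 : b ≠ -1 := fun h => hb2 (by rw [h]; norm_num)
  obtain ⟨k, hk0, hkd, hk | hk⟩ := hζ.exists_pow_eq_or_pow_eq_inv hbd hb2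
  · exact ⟨k, hk0, hkd, Or.inl (eq_mul_sub_one_div_add_one (sub_ne_zero.mpr ha.1) (hk ▸ hb1) hk)⟩
  · have hk1 : ζ ^ k ≠ -1 := by rw [hk, Ne, inv_eq_iff_eq_inv, inv_neg, inv_one]; exact hb1
    have hkα : ζ ^ k = (a + -α) / (a - -α) := by
      rw [hk, hb, GCarrier.psi, inv_div, sub_neg_eq_add, ← sub_eq_add_neg]
    exact ⟨k, hk0, hkd, Or.inr (neg_eq_iff_eq_neg.mp
      (eq_mul_sub_one_div_add_one (sub_ne_zero.mpr ha.2) hk1 hkα))⟩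
end

section
/- Let p ≡ 1 (mod 4) be prime and suppose p ≡ 4 (mod 5). Let a = (−1 + √5)/2 ∈ F_p (where √5 denotes a square root of 5, which exists in F_p). Then a² − 4 is a quadratic nonresidue in F_p. -/
/-! A square root `t` of `a² - 4` would make `z = (a + t) / 2` a root of `z² - a z + 1`.
Since `a² + a = 1`, such a `z` is a primitive fifth root of unity (`a` plays the role of
`ζ₅ + ζ₅⁻¹`), and the multiplicative group of `𝔽_p` has no element of order `5` when
`p ≡ 4 (mod 5)`. -/

section

variable {R : Type*} [CommRing R] {a z : R}

theorem pow_five_eq_one_of_sq_sub_mul_add_one (ha : a ^ 2 + a = 1) (hz : z ^ 2 - a * z + 1 = 0) :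
    z ^ 5 = 1 := by
  linear_combination (z ^ 3 + a * z ^ 2 + (a ^ 2 - 1) * z + a ^ 3 - 2 * a) * hz
    + ((a ^ 2 - a - 1) * z - (a - 1)) * ha

theorem orderOf_eq_five_of_sq_sub_mul_add_one (h5 : (5 : R) ≠ 0) (ha : a ^ 2 + a = 1)
    (hz : z ^ 2 - a * z + 1 = 0) : orderOf z = 5 := by
  have := Fact.mk Nat.prime_five
  refine orderOf_eq_prime (pow_five_eq_one_of_sq_sub_mul_add_one ha hz) ?_
  rintro rfl
  exact h5 (by linear_combination ha + (a + 3) * hz)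

end

section

variable {K : Type*} [Field K] [NeZero (2 : K)]

theorem sq_add_self_eq_one_of_sq_eq_five {s : K} (hs : s ^ 2 = 5) :
    ((-1 + s) / 2) ^ 2 + (-1 + s) / 2 = 1 := by
  field_simp
  linear_combination hs

theorem five_dvd_card_sub_one_of_isSquare_sq_sub_four [Fintype K]
    (h5 : (5 : K) ≠ 0) {a : K} (ha : a ^ 2 + a = 1) (hsq : IsSquare (a ^ 2 - 4)) :
    5 ∣ Fintype.card K - 1 := by
  have hdiscrim : discrim 1 (-a) 1 = a ^ 2 - 4 := by rw [discrim]; ring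
  obtain ⟨z, hz⟩ := exists_quadratic_eq_zero one_ne_zero (hdiscrim ▸ hsq)
  have hord : orderOf z = 5 :=
    orderOf_eq_five_of_sq_sub_mul_add_one h5 ha (by linear_combination hz)
  have hz0 : z ≠ 0 := by rintro rfl; simp at hord
  exact hord ▸ orderOf_dvd_of_pow_eq_one (FiniteField.pow_card_sub_one_eq_one z hz0)

end

theorem natCast_prime_ne_zero_zmod {p q : ℕ} (hq : q.Prime) (hp1 : p ≠ 1) (hpq : p ≠ q) :
    (q : ZMod p) ≠ 0 := by
  rw [Ne, ZMod.natCast_eq_zero_iff, Nat.dvd_prime hq]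
  tauto

theorem a_sq_sub_four_nonresidue_general (p : ℕ) [Fact p.Prime]
    (hp5 : p % 5 = 4) (s : ZMod p) (hs : s ^ 2 = 5)
    (a : ZMod p) (ha : a = (-1 + s) / 2) :
    ¬ IsSquare (a ^ 2 - 4) := by
  intro hsq
  have : NeZero (2 : ZMod p) :=
    ⟨by exact_mod_cast natCast_prime_ne_zero_zmod Nat.prime_two (by omega) (by omega)⟩
  have h5 : (5 : ZMod p) ≠ 0 := by
    exact_mod_cast natCast_prime_ne_zero_zmod Nat.prime_five (by omega) (by omega)
  have hdvd := five_dvd_card_sub_one_of_isSquare_sq_sub_four h5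
    (ha ▸ sq_add_self_eq_one_of_sq_eq_five hs) hsq
  rw [ZMod.card] at hdvd
  omega

/-- Let `p ≡ 1 (mod 4)` be a prime with `p ≡ 4 (mod 5)`, and let
`s` be a square root of `5` in `F_p`. Setting `a = (−1 + s)/2`, the element
`a² − 4` is a quadratic nonresidue in `F_p`. -/
theorem a_sq_sub_four_nonresidue (p : ℕ) [Fact p.Prime] (hp4 : p % 4 = 1)
    (hp5 : p % 5 = 4) (s : ZMod p) (hs : s ^ 2 = 5)
    (a : ZMod p) (ha : a = (-1 + s) / 2) :
    ¬ IsSquare (a ^ 2 - 4) :=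
  a_sq_sub_four_nonresidue_general p hp5 s hs a ha
end

section
/- (Proth's Theorem) Let N = 2^e t + 1 with t odd and 2^e > t > 0, N > 3. If there exists an integer a with a^{(N−1)/2} ≡ −1 (mod N), then N is prime. -/
/-! If `p` is a prime factor of `N` and `a ^ (2 ^ (e - 1) * t) = -1` modulo `N`, then the same
holds modulo `p`, so `a ^ t` has multiplicative order exactly `2 ^ e` in `ZMod p`; by Fermat
`2 ^ e ∣ p - 1`, so `p > 2 ^ e > √N`. A number all of whose prime factors exceed its square root
is prime. -/

theorem ZMod.two_pow_succ_dvd_sub_one_of_pow_two_pow_eq_neg_one {p : ℕ} [Fact p.Prime]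
    (hp : p ≠ 2) {c : ZMod p} {k : ℕ} (hc : c ^ 2 ^ k = -1) : 2 ^ (k + 1) ∣ p - 1 := by
  have : Fact (2 < p) := ⟨(Fact.out : p.Prime).two_le.lt_of_ne' hp⟩
  have hc0 : c ≠ 0 := by
    rintro rfl
    simp at hc
  have hord : orderOf c = 2 ^ (k + 1) :=
    orderOf_eq_prime_pow (by rw [hc]; exact ZMod.neg_one_ne_one)
      (by rw [pow_succ, pow_mul, hc, neg_one_sq])
  exact hord ▸ ZMod.orderOf_dvd_card_sub_one hc0

theorem two_pow_succ_dvd_sub_one_of_prime_dvd {N p k m : ℕ} (hp : p.Prime) (hp2 : p ≠ 2)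
    (hpN : p ∣ N) {a : ZMod N} (ha : a ^ (2 ^ k * m) = -1) : 2 ^ (k + 1) ∣ p - 1 := by
  have : Fact p.Prime := ⟨hp⟩
  refine ZMod.two_pow_succ_dvd_sub_one_of_pow_two_pow_eq_neg_one hp2
    (c := ZMod.castHom hpN (ZMod p) a ^ m) ?_
  rw [← pow_mul, mul_comm, ← map_pow, ha, map_neg, map_one]

theorem Nat.prime_of_forall_prime_dvd_lt_sq {N : ℕ} (hN : 1 < N)
    (h : ∀ p, p.Prime → p ∣ N → N < p ^ 2) : N.Prime := by
  by_contra hcomposite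
  have := h N.minFac (Nat.minFac_prime hN.ne') (Nat.minFac_dvd N)
  have := Nat.minFac_sq_le_self (by omega) hcomposite
  omega

theorem proth_theorem_general (N e t : ℕ) (ht0 : 0 < t) (hlt : t < 2 ^ e)
    (hN : N = 2 ^ e * t + 1)
    (a : ZMod N) (ha : a ^ ((N - 1) / 2) = -1) :
    N.Prime := by
  obtain ⟨f, rfl⟩ : ∃ f, e = f + 1 :=
    Nat.exists_eq_succ_of_ne_zero (by rintro rfl; omega)
  have hN_odd : N = 2 * (2 ^ f * t) + 1 := by rw [hN, pow_succ]; ring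
  have hhalf : (N - 1) / 2 = 2 ^ f * t := by omega
  rw [hhalf] at ha
  refine Nat.prime_of_forall_prime_dvd_lt_sq
    (by have := Nat.mul_pos (Nat.two_pow_pos f) ht0; omega) fun p hp hpN => ?_
  have hp2 : p ≠ 2 := by
    rintro rfl
    omega
  have hdvd := two_pow_succ_dvd_sub_one_of_prime_dvd hp hp2 hpN ha
  have hple : 2 ^ (f + 1) < p := by
    have := Nat.le_of_dvd (Nat.sub_pos_of_lt hp.one_lt) hdvd
    omega
  rw [hN]
  nlinarith

/-- Proth's Theorem. Let `N = 2^e t + 1` with `t` odd, `0 < t < 2^e`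
and `N > 3`. If `a^{(N−1)/2} ≡ −1 (mod N)` for some `a`, then `N` is prime. -/
theorem proth_theorem (N e t : ℕ) (ht : Odd t) (ht0 : 0 < t) (hlt : t < 2 ^ e)
    (hN : N = 2 ^ e * t + 1) (hN3 : 3 < N)
    (a : ZMod N) (ha : a ^ ((N - 1) / 2) = -1) :
    N.Prime :=
  proth_theorem_general N e t ht0 hlt hN a ha
end
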